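/- arXiv:1208.5342 — 2 statements merged into one kernel-verified Lean document; each statement's English description precedes it below -/
import Mathlib

section
/- Let b be an integer, m ≥ 0 and k ≥ 1. Suppose that for each pair (i,j) with 2 ≤ i < j ≤ k and F_{b,m}(p_i p_j) > 0 we are given an integer c_{ij} with the following property: letting y + p_i p_j be the smallest multiple of p_i p_j in the interval (b, b+m], one has gcd(c_{ij} + x, P_{i−1}) = gcd(y + x·p_i p_j, P_{i−1}) for all integers x. Then φ(b,m,k) = m − Σ_{i=1}^{k} F_{b,m}(p_i) + Σ_{j=2}^{k} F_{b,m}(2·p_j) + Σ_{i=2}^{k−1} Σ_{j=i+1}^{k} φ(c_{ij}, F_{b,m}(p_i p_j), i−1). -/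
open Finset

/-- The i-th prime, 1-indexed: `nthPrime 1 = 2`, `nthPrime 2 = 3`, ... -/
noncomputable def nthPrime (i : ℕ) : ℕ := Nat.nth Nat.Prime (i - 1)

/-- `primProd k` is the product `P_k` of the first `k` primes. -/
noncomputable def primProd (k : ℕ) : ℕ := ∏ i ∈ Finset.range k, Nat.nth Nat.Prime i

/-- `Fcount b m d` is the number of integers `a` with `b < a ≤ b + m` divisible by `d`. -/
noncomputable def Fcount (b : ℤ) (m d : ℕ) : ℕ :=
  ((Finset.Ioc b (b + (m : ℤ))).filter (fun a => (d : ℤ) ∣ a)).card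

/-- `phiInt b m k` is the number of integers `a` with `b < a ≤ b + m` coprime to `P_k`. -/
noncomputable def phiInt (b : ℤ) (m k : ℕ) : ℕ :=
  ((Finset.Ioc b (b + (m : ℤ))).filter (fun a => Int.gcd a (primProd k) = 1)).card

/-- `omegaK k a` is the number of indices `i` with `1 ≤ i ≤ k` such that `p_i ∣ a`. -/
noncomputable def omegaK (k : ℕ) (a : ℤ) : ℕ :=
  ((Finset.Icc 1 k).filter (fun i => (nthPrime i : ℤ) ∣ a)).card

/-- `phiMin m k` is the minimum of `phiInt b m k` over all integers `b`. -/
noncomputable def phiMin (m k : ℕ) : ℕ := sInf {n : ℕ | ∃ b : ℤ, phiInt b m k = n}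

/-
For `a` in `(b, b + m]` let `S` be the set of indices `i ≤ k` with `p_i ∣ a`. Then
`[S = ∅] = 1 - |S| + (|S| - 1) [S ≠ ∅]`, and `|S| - 1` counts the pairs `i < j` in `S` with
`i = min S`: for `i = 1` these are the `j` with `2 p_j ∣ a`, for `i ≥ 2` the pairs with
`p_i p_j ∣ a` and `gcd(a, P_{i-1}) = 1`. Summing over `a` gives the identity, once the number of
multiples of `p_i p_j` in the interval that are coprime to `P_{i-1}` is recognised as
`φ(c_ij, F(p_i p_j), i-1)`: these multiples are `y + x p_i p_j` for `0 < x ≤ F(p_i p_j)`, and the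
hypothesis on `c_ij` matches coprimality of `y + x p_i p_j` with that of `c_ij + x`.
-/

lemma prime_natCast_nthPrime (i : ℕ) : Prime (nthPrime i : ℤ) :=
  Nat.prime_iff_prime_int.mp (Nat.prime_nth_prime _)

lemma nthPrime_one : nthPrime 1 = 2 := Nat.nth_prime_zero_eq_two

lemma nthPrime_lt_nthPrime {i j : ℕ} (hi : 1 ≤ i) (hij : i < j) : nthPrime i < nthPrime j :=
  (Nat.nth_lt_nth Nat.infinite_setOfPred_prime).mpr (by omega)

lemma primProd_eq_prod_Icc (n : ℕ) : primProd n = ∏ i ∈ Icc 1 n, nthPrime i := by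
  rw [primProd, ← Ico_add_one_right_eq_Icc, prod_Ico_eq_prod_range]
  simp [nthPrime]

lemma gcd_primProd_eq_one_iff (a : ℤ) (n : ℕ) :
    Int.gcd a (primProd n) = 1 ↔ ∀ i ∈ Icc 1 n, ¬ (nthPrime i : ℤ) ∣ a := by
  rw [← Int.isCoprime_iff_gcd_eq_one, primProd_eq_prod_Icc, Nat.cast_prod,
    IsCoprime.prod_right_iff]
  refine forall₂_congr fun i _ => ?_
  rw [isCoprime_comm, (prime_natCast_nthPrime i).coprime_iff_not_dvd]

lemma natCast_nthPrime_mul_dvd_iff {i j : ℕ} (hi : 1 ≤ i) (hij : i < j) (a : ℤ) :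
    ((nthPrime i * nthPrime j : ℕ) : ℤ) ∣ a ↔ (nthPrime i : ℤ) ∣ a ∧ (nthPrime j : ℤ) ∣ a := by
  have hcop : IsCoprime (nthPrime i : ℤ) (nthPrime j) := Nat.Coprime.isCoprime <|
    (Nat.coprime_primes (Nat.prime_nth_prime _) (Nat.prime_nth_prime _)).mpr
      (nthPrime_lt_nthPrime hi hij).ne
  push_cast
  exact ⟨fun h => ⟨dvd_of_mul_right_dvd h, dvd_of_mul_left_dvd h⟩, fun h => hcop.mul_dvd h.1 h.2⟩

lemma ite_eq_empty_eq_one_sub_card_add_sum_least_pairs {r s : ℕ} {S : Finset ℕ}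
    (hS : S ⊆ Icc r s) :
    (if S = ∅ then 1 else 0 : ℤ) = 1 - #S +
      ∑ i ∈ Icc r s, ∑ j ∈ Icc (i + 1) s, if i ∈ S ∧ j ∈ S ∧ ∀ l ∈ S, i ≤ l then 1 else 0 := by
  rcases S.eq_empty_or_nonempty with rfl | hne
  · simp
  set i₀ := S.min' hne
  have hi₀S : i₀ ∈ S := S.min'_mem hne
  have hi₀le : ∀ l ∈ S, i₀ ≤ l := fun l hl => S.min'_le l hl
  have hpairs : ∀ i ∈ Icc r s, i ≠ i₀ →
      ∑ j ∈ Icc (i + 1) s, (if i ∈ S ∧ j ∈ S ∧ ∀ l ∈ S, i ≤ l then 1 else 0 : ℤ) = 0 := by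
    refine fun i _ hi => sum_eq_zero fun j _ => if_neg fun ⟨hiS, _, hle⟩ => hi ?_
    exact le_antisymm (hle _ hi₀S) (hi₀le i hiS)
  have hsucc : {j ∈ Icc (i₀ + 1) s | j ∈ S} = S.erase i₀ := by
    ext j
    simp only [mem_filter, mem_Icc, mem_erase]
    constructor
    · rintro ⟨⟨hj, -⟩, hjS⟩
      exact ⟨by omega, hjS⟩
    · rintro ⟨hj, hjS⟩
      exact ⟨⟨lt_of_le_of_ne (hi₀le j hjS) (Ne.symm hj), (mem_Icc.mp (hS hjS)).2⟩, hjS⟩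
  rw [if_neg hne.ne_empty, sum_eq_single_of_mem i₀ (hS hi₀S) hpairs]
  simp only [hi₀S, true_and, and_iff_left hi₀le]
  rw [sum_boole, hsucc, ← card_erase_add_one hi₀S]
  push_cast
  ring

lemma nthPrime_mul_dvd_and_gcd_primProd_eq_one_iff {i j k : ℕ} (hi : 1 ≤ i) (hij : i + 1 ≤ j)
    (hjk : j ≤ k) (a : ℤ) :
    (((nthPrime i * nthPrime j : ℕ) : ℤ) ∣ a ∧ Int.gcd a (primProd (i - 1)) = 1) ↔
      let S := {l ∈ Icc 1 k | (nthPrime l : ℤ) ∣ a}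
      i ∈ S ∧ j ∈ S ∧ ∀ l ∈ S, i ≤ l := by
  simp only [mem_filter, mem_Icc]
  rw [natCast_nthPrime_mul_dvd_iff hi (by omega), gcd_primProd_eq_one_iff]
  constructor
  · rintro ⟨⟨hpi, hpj⟩, hcop⟩
    refine ⟨⟨⟨hi, by omega⟩, hpi⟩, ⟨⟨by omega, hjk⟩, hpj⟩, fun l ⟨hl, hpl⟩ => ?_⟩
    by_contra! hli
    exact hcop l (mem_Icc.mpr ⟨hl.1, by omega⟩) hpl
  · rintro ⟨⟨-, hpi⟩, ⟨-, hpj⟩, hmin⟩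
    refine ⟨⟨hpi, hpj⟩, fun l hl hpl => ?_⟩
    have hl' := mem_Icc.mp hl
    have := hmin l ⟨⟨hl'.1, by omega⟩, hpl⟩
    omega

lemma ite_gcd_primProd_eq_one (k : ℕ) (a : ℤ) :
    (if Int.gcd a (primProd k) = 1 then 1 else 0 : ℤ) =
      1 - ∑ i ∈ Icc 1 k, (if (nthPrime i : ℤ) ∣ a then 1 else 0) +
        ∑ j ∈ Icc 2 k, (if ((2 * nthPrime j : ℕ) : ℤ) ∣ a then 1 else 0) +
        ∑ i ∈ Icc 2 k, ∑ j ∈ Icc (i + 1) k,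
          if ((nthPrime i * nthPrime j : ℕ) : ℤ) ∣ a ∧ Int.gcd a (primProd (i - 1)) = 1
          then 1 else 0 := by
  obtain rfl | hk := Nat.eq_zero_or_pos k
  · simp [primProd]
  set S := {i ∈ Icc 1 k | (nthPrime i : ℤ) ∣ a}
  have hpair : ∀ i ∈ Icc 1 k, ∀ j ∈ Icc (i + 1) k,
      (((nthPrime i * nthPrime j : ℕ) : ℤ) ∣ a ∧ Int.gcd a (primProd (i - 1)) = 1) ↔
        (i ∈ S ∧ j ∈ S ∧ ∀ l ∈ S, i ≤ l) := fun i hi j hj =>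
    nthPrime_mul_dvd_and_gcd_primProd_eq_one_iff (mem_Icc.mp hi).1 (mem_Icc.mp hj).1
      (mem_Icc.mp hj).2 a
  have hfirst : ∀ j ∈ Icc 2 k,
      ((2 * nthPrime j : ℕ) : ℤ) ∣ a ↔ (1 ∈ S ∧ j ∈ S ∧ ∀ l ∈ S, 1 ≤ l) := by
    intro j hj
    rw [← hpair 1 (mem_Icc.mpr ⟨le_rfl, hk⟩) j hj, nthPrime_one]
    simp [primProd]
  have hempty : Int.gcd a (primProd k) = 1 ↔ S = ∅ := by
    rw [gcd_primProd_eq_one_iff, filter_eq_empty_iff]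
  have hcard : ∑ i ∈ Icc 1 k, (if (nthPrime i : ℤ) ∣ a then 1 else 0) = (#S : ℤ) :=
    (natCast_card_filter _ _).symm
  have key := ite_eq_empty_eq_one_sub_card_add_sum_least_pairs (S := S) (filter_subset _ _)
  clear_value S
  rw [Icc_eq_cons_Ioc hk, sum_cons, ← Icc_add_one_left_eq_Ioc] at key
  rw [if_congr hempty rfl rfl, key, hcard, add_assoc,
    sum_congr rfl fun j hj => if_congr (hfirst j hj) rfl rfl]
  congr 2
  refine sum_congr rfl fun i hi => sum_congr rfl fun j hj => if_congr ?_ rfl rfl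
  exact (hpair i (Icc_subset_Icc_left (by norm_num) hi) j hj).symm

lemma card_filter_Ioc_add_eq (c N : ℤ) (p : ℤ → Prop) [DecidablePred p] :
    #{a ∈ Ioc c (c + N) | p a} = #{x ∈ Ioc 0 N | p (c + x)} := by
  have hshift : Ioc c (c + N) = (Ioc 0 N).image (c + ·) := by rw [image_add_left_Ioc, add_zero]
  rw [hshift, filter_image, card_image_of_injective _ (add_right_injective c)]

lemma card_filter_Ioc_dvd_and_eq {q y b B : ℤ} (hq : 0 < q) (hy : q ∣ y) (hyb : y ≤ b)
    (hby : b < y + q) (p : ℤ → Prop) [DecidablePred p] :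
    #{a ∈ Ioc b B | q ∣ a ∧ p a} = #{x ∈ Ioc 0 ((B - y) / q) | p (y + x * q)} := by
  have hinj : Function.Injective fun x => y + x * q :=
    fun x x' h => mul_right_cancel₀ hq.ne' (add_left_cancel h)
  rw [← card_image_of_injective {x ∈ Ioc 0 ((B - y) / q) | p (y + x * q)} hinj]
  congr 1
  ext a
  simp only [mem_filter, mem_Ioc, mem_image]
  constructor
  · rintro ⟨⟨hba, haB⟩, hqa, hpa⟩
    obtain ⟨x, hx⟩ := dvd_sub hqa hy
    refine ⟨x, ⟨⟨?_, ?_⟩, ?_⟩, ?_⟩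
    · nlinarith
    · rw [Int.le_ediv_iff_mul_le hq]; linarith
    · rwa [show y + x * q = a by linarith]
    · linarith
  · rintro ⟨x, ⟨⟨hx0, hxN⟩, hpx⟩, rfl⟩
    have hxq : x * q ≤ B - y := (Int.le_ediv_iff_mul_le hq).mp hxN
    exact ⟨⟨by nlinarith, by linarith⟩, dvd_add hy (dvd_mul_left q x), hpx⟩

lemma phiInt_eq_card_filter_dvd_coprime {b c : ℤ} {m q n : ℕ} (hq : 0 < q)
    (hc : 0 < Fcount b m q → ∀ y : ℤ,
      (b < y + q ∧ y + q ≤ b + m ∧ (q : ℤ) ∣ y + q ∧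
        ∀ a ∈ Ioc b (b + (m : ℤ)), (q : ℤ) ∣ a → y + q ≤ a) →
      ∀ x : ℤ, Int.gcd (c + x) (primProd n) = Int.gcd (y + x * q) (primProd n)) :
    phiInt c (Fcount b m q) n =
      #{a ∈ Ioc b (b + (m : ℤ)) | (q : ℤ) ∣ a ∧ Int.gcd a (primProd n) = 1} := by
  have hq' : (0 : ℤ) < q := by exact_mod_cast hq
  set y := b / q * q
  have hy : (q : ℤ) ∣ y := dvd_mul_left _ _
  have hyb : y ≤ b := Int.ediv_mul_le b hq'.ne'
  have hby : b < y + q := by linarith [Int.lt_ediv_add_one_mul_self b hq']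
  set N := (b + m - y) / q
  have hF : (Fcount b m q : ℤ) = N := by
    have := card_filter_Ioc_dvd_and_eq (B := b + m) hq' hy hyb hby (fun _ => True)
    simp only [and_true, filter_true, Int.card_Ioc, sub_zero] at this
    rw [Fcount, this, Int.toNat_of_nonneg (Int.ediv_nonneg (by linarith) hq'.le)]
  rw [phiInt, hF, card_filter_Ioc_add_eq, card_filter_Ioc_dvd_and_eq hq' hy hyb hby]
  refine congrArg card (filter_congr fun x hx => ?_)
  have hx := mem_Ioc.mp hx
  rw [hc (by omega) y ⟨hby, ?_, dvd_add hy dvd_rfl, fun a ha hqa => ?_⟩ x]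
  · have := (Int.le_ediv_iff_mul_le hq').mp (show 1 ≤ N by omega)
    linarith
  · have := Int.le_of_dvd (by linarith [(mem_Ioc.mp ha).1]) (dvd_sub hqa hy)
    linarith

theorem phiInt_recurrence_general (b : ℤ) (m k : ℕ) (c : ℕ → ℕ → ℤ)
    (hc : ∀ i j : ℕ, 2 ≤ i → i < j → j ≤ k →
      0 < Fcount b m (nthPrime i * nthPrime j) →
      ∀ y : ℤ,
        (b < y + ((nthPrime i * nthPrime j : ℕ) : ℤ) ∧
          y + ((nthPrime i * nthPrime j : ℕ) : ℤ) ≤ b + (m : ℤ) ∧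
          ((nthPrime i * nthPrime j : ℕ) : ℤ) ∣ (y + ((nthPrime i * nthPrime j : ℕ) : ℤ)) ∧
          ∀ a ∈ Finset.Ioc b (b + (m : ℤ)), ((nthPrime i * nthPrime j : ℕ) : ℤ) ∣ a →
            y + ((nthPrime i * nthPrime j : ℕ) : ℤ) ≤ a) →
        ∀ x : ℤ, Int.gcd (c i j + x) (primProd (i - 1)) =
          Int.gcd (y + x * ((nthPrime i * nthPrime j : ℕ) : ℤ)) (primProd (i - 1))) :
    (phiInt b m k : ℤ) =
      (m : ℤ) - (∑ i ∈ Finset.Icc 1 k, (Fcount b m (nthPrime i) : ℤ)) +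
        (∑ j ∈ Finset.Icc 2 k, (Fcount b m (2 * nthPrime j) : ℤ)) +
        ∑ i ∈ Finset.Icc 2 (k - 1), ∑ j ∈ Finset.Icc (i + 1) k,
          (phiInt (c i j) (Fcount b m (nthPrime i * nthPrime j)) (i - 1) : ℤ) := by
  have hpairs : ∀ i ∈ Icc 2 k, ∀ j ∈ Icc (i + 1) k,
      (phiInt (c i j) (Fcount b m (nthPrime i * nthPrime j)) (i - 1) : ℤ) =
        ∑ a ∈ Ioc b (b + (m : ℤ)), if ((nthPrime i * nthPrime j : ℕ) : ℤ) ∣ a ∧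
          Int.gcd a (primProd (i - 1)) = 1 then 1 else 0 := by
    intro i hi j hj
    simp only [mem_Icc] at hi hj
    rw [phiInt_eq_card_filter_dvd_coprime (q := nthPrime i * nthPrime j)
      (Nat.mul_pos (Nat.prime_nth_prime _).pos (Nat.prime_nth_prime _).pos)
      (hc i j hi.1 (by omega) hj.2), natCast_card_filter]
  have hrange : ∑ i ∈ Icc 2 (k - 1), ∑ j ∈ Icc (i + 1) k,
      (phiInt (c i j) (Fcount b m (nthPrime i * nthPrime j)) (i - 1) : ℤ) =
      ∑ i ∈ Icc 2 k, ∑ j ∈ Icc (i + 1) k,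
        (phiInt (c i j) (Fcount b m (nthPrime i * nthPrime j)) (i - 1) : ℤ) :=
    sum_subset (Icc_subset_Icc_right (by omega)) fun i hi hi' => by
      rw [Icc_eq_empty (by simp only [mem_Icc] at hi hi'; omega), sum_empty]
  rw [hrange, sum_congr rfl fun i hi => sum_congr rfl (hpairs i hi), phiInt, natCast_card_filter,
    sum_congr rfl fun a _ => ite_gcd_primProd_eq_one k a]
  simp only [Fcount, natCast_card_filter, sum_add_distrib, sum_sub_distrib, sum_const,
    Int.card_Ioc, add_sub_cancel_left, Int.toNat_natCast, nsmul_eq_mul, mul_one]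
  rw [sum_comm (s := Ioc b _), sum_comm (s := Ioc b _) (t := Icc 2 k), sum_comm (s := Ioc b _)]
  exact congrArg _ (sum_congr rfl fun _ _ => sum_comm)

/-- Given suitable transfer constants `c i j` for each pair `2 ≤ i < j ≤ k` with
`F_{b,m}(p_i p_j) > 0`, we have
`φ(b,m,k) = m − Σ_{i=1}^{k} F_{b,m}(p_i) + Σ_{j=2}^{k} F_{b,m}(2 p_j)
  + Σ_{i=2}^{k−1} Σ_{j=i+1}^{k} φ(c_{ij}, F_{b,m}(p_i p_j), i−1)`. -/
theorem phiInt_recurrence (b : ℤ) (m k : ℕ) (hk : 1 ≤ k) (c : ℕ → ℕ → ℤ)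
    (hc : ∀ i j : ℕ, 2 ≤ i → i < j → j ≤ k →
      0 < Fcount b m (nthPrime i * nthPrime j) →
      ∀ y : ℤ,
        (b < y + ((nthPrime i * nthPrime j : ℕ) : ℤ) ∧
          y + ((nthPrime i * nthPrime j : ℕ) : ℤ) ≤ b + (m : ℤ) ∧
          ((nthPrime i * nthPrime j : ℕ) : ℤ) ∣ (y + ((nthPrime i * nthPrime j : ℕ) : ℤ)) ∧
          ∀ a ∈ Finset.Ioc b (b + (m : ℤ)), ((nthPrime i * nthPrime j : ℕ) : ℤ) ∣ a →
            y + ((nthPrime i * nthPrime j : ℕ) : ℤ) ≤ a) →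
        ∀ x : ℤ, Int.gcd (c i j + x) (primProd (i - 1)) =
          Int.gcd (y + x * ((nthPrime i * nthPrime j : ℕ) : ℤ)) (primProd (i - 1))) :
    (phiInt b m k : ℤ) =
      (m : ℤ) - (∑ i ∈ Finset.Icc 1 k, (Fcount b m (nthPrime i) : ℤ)) +
        (∑ j ∈ Finset.Icc 2 k, (Fcount b m (2 * nthPrime j) : ℤ)) +
        ∑ i ∈ Finset.Icc 2 (k - 1), ∑ j ∈ Finset.Icc (i + 1) k,
          (phiInt (c i j) (Fcount b m (nthPrime i * nthPrime j)) (i - 1) : ℤ) :=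
  phiInt_recurrence_general b m k c hc
end

section
/- Let p and q be distinct primes, let m ≥ 0, and set x = m mod p. If x > 0 and q divides m − x + p, then for every integer b: F_{b,m}(p) = ⌈m/p⌉ implies F_{b,m}(p·q) = ⌈m/(p·q)⌉. -/
open Finset

/-!
Write `m = p k + x` with `0 < x < p`. Then `⌈m / p⌉ = k + 1`, and the hypothesis says `q ∣ p (k + 1)`,
so `k + 1 = q s`. Counting multiples of `p q` in `(b, b + m]` amounts to counting multiples of `q`
among the quotients `⌊a / p⌋`, and these quotients run through `q s` consecutive integers, so there
are exactly `s` of them. On the other side `m = p q s - (p - x)` with `0 < p - x < p q`, so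
`⌈m / (p q)⌉ = s` as well.
-/

lemma Fcount_eq_ediv_sub_ediv (b : ℤ) (m : ℕ) {d : ℕ} (hd : 0 < d) :
    (Fcount b m d : ℤ) = (b + m) / d - b / d := by
  have hd' : (0 : ℤ) < d := by exact_mod_cast hd
  have hle : b / (d : ℤ) ≤ (b + m) / d := Int.ediv_le_ediv hd' (by omega)
  rw [Fcount, Int.Ioc_filter_dvd_card _ _ hd', Int.cast_natCast, Rat.floor_intCast_div_natCast,
    Rat.floor_intCast_div_natCast, max_eq_left (by omega)]

lemma Fcount_mul_eq_of_Fcount_eq_mul {b : ℤ} {m d e s : ℕ} (hd : 0 < d) (he : 0 < e)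
    (h : Fcount b m d = e * s) : Fcount b m (d * e) = s := by
  have he' : (e : ℤ) ≠ 0 := by exact_mod_cast he.ne'
  have hquot : (b + m) / (d : ℤ) = b / d + e * s := by
    have := Fcount_eq_ediv_sub_ediv b m hd
    rw [h] at this
    push_cast at this
    omega
  have hdiv (a : ℤ) : a / ((d * e : ℕ) : ℤ) = a / d / e := by
    push_cast
    exact Int.ediv_mul_of_nonneg (Int.natCast_nonneg d)
  rw [← Int.natCast_inj, Fcount_eq_ediv_sub_ediv b m (Nat.mul_pos hd he), hdiv, hdiv, hquot,
    Int.add_mul_ediv_left _ _ he', add_sub_cancel_left]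

lemma ceil_natCast_div_eq_of_add_eq {m r d n : ℕ} (h : m + r = d * n) (hr : r < d) :
    ⌈(m : ℚ) / d⌉ = n := by
  have hd : (0 : ℚ) < d := by exact_mod_cast (Nat.zero_le r).trans_lt hr
  have hr' : (r : ℚ) < d := by exact_mod_cast hr
  have hm : (m : ℚ) = d * n - r := by
    rw [eq_sub_iff_add_eq]
    exact_mod_cast h
  rw [Int.ceil_eq_iff, hm, lt_div_iff₀ hd, div_le_iff₀ hd]
  push_cast
  constructor <;> nlinarith [r.cast_nonneg (α := ℚ)]

/-- For distinct primes `p`, `q` and `m ≥ 0` with `x = m mod p`: if `x > 0` and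
`q ∣ m − x + p`, then `F_{b,m}(p) = ⌈m/p⌉` implies `F_{b,m}(pq) = ⌈m/(pq)⌉`. -/
theorem Fcount_ceil_of_ceil (p q m : ℕ) (hp : p.Prime) (hq : q.Prime) (hpq : p ≠ q)
    (x : ℕ) (hx : x = m % p) (hxpos : 0 < x) (hdvd : q ∣ m - x + p) (b : ℤ)
    (h : (Fcount b m p : ℤ) = ⌈(m : ℚ) / (p : ℚ)⌉) :
    (Fcount b m (p * q) : ℤ) = ⌈(m : ℚ) / ((p * q : ℕ) : ℚ)⌉ := by
  have hxp : x < p := hx ▸ Nat.mod_lt m hp.pos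
  have hsplit : m + (p - x) = p * (m / p + 1) := by
    have := Nat.div_add_mod m p
    rw [← hx] at this
    rw [Nat.mul_add, mul_one]
    omega
  obtain ⟨s, hs⟩ : q ∣ m / p + 1 := by
    have hxm : m - x + p = m + (p - x) := by rw [hx]; have := Nat.mod_le m p; omega
    rw [hxm, hsplit] at hdvd
    exact ((Nat.coprime_primes hq hp).2 hpq.symm).dvd_of_dvd_mul_left hdvd
  rw [ceil_natCast_div_eq_of_add_eq hsplit (by omega), hs] at h
  have hsplit_pq : m + (p - x) = (p * q) * s := by rw [hsplit, hs, mul_assoc]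
  rw [ceil_natCast_div_eq_of_add_eq hsplit_pq
    ((Nat.sub_lt hp.pos hxpos).trans_le (Nat.le_mul_of_pos_right p hq.pos))]
  exact_mod_cast Fcount_mul_eq_of_Fcount_eq_mul hp.pos hq.pos (by exact_mod_cast h)
end
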